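/- Let N ≥ 1, let D ⊆ ℂ^N be a bounded convex domain, let G : D × [0,∞) → ℂ^N be a Herglotz vector field of order d ∈ [1,∞] on D, and let (f_t : D → ℂ^N)_{t≥0} be a solution of the Loewner PDE for G. Then there exists a set E ⊆ [0,∞) of Lebesgue measure zero such that for every z ∈ D and every t ∈ [0,∞) \ E the partial derivative ∂f_t(z)/∂t exists and ∂f_t(z)/∂t = −df_t(z)·G(z,t). -/

import Mathlib

open MeasureTheory Set Metric Filter
open scoped ENNReal

noncomputable section

/-- `ℂ^N` with the Euclidean norm. -/
abbrev ℂN (N : ℕ) := EuclideanSpace ℂ (Fin N)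

variable {N : ℕ}

/-- A domain: a nonempty open connected set. -/
def IsDomainSet (D : Set (ℂN N)) : Prop := IsOpen D ∧ IsConnected D

/-- A holomorphic vector field `H` on `D` is semicomplete if every Cauchy problem
`x'(s) = H(x(s))`, `x(0) = z₀` with `z₀ ∈ D` has a solution defined on all of `[0,∞)`
with values in `D`. -/
def Semicomplete (H : ℂN N → ℂN N) (D : Set (ℂN N)) : Prop :=
  ∀ z₀ ∈ D, ∃ x : ℝ → ℂN N, x 0 = z₀ ∧ (∀ s : ℝ, 0 ≤ s → x s ∈ D) ∧
    ∀ s : ℝ, 0 ≤ s → HasDerivAt x (H (x s)) s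

/-- A Herglotz vector field of order `d` on a domain `D ⊆ ℂ^N`. -/
structure IsHerglotzVectorField (G : ℂN N → ℝ → ℂN N) (D : Set (ℂN N)) (d : ℝ≥0∞) :
    Prop where
  measurable_t : ∀ z ∈ D, StronglyMeasurable fun t : ℝ => G z t
  holomorphic : ∀ t : ℝ, 0 ≤ t → DifferentiableOn ℂ (fun z => G z t) D
  lp_bound : ∀ K : Set (ℂN N), K ⊆ D → IsCompact K → ∀ T : ℝ, 0 < T →
    ∃ C : ℝ → ℝ, (∀ t, 0 ≤ C t) ∧ MemLp C d (volume.restrict (Icc (0:ℝ) T)) ∧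
      ∀ᵐ t ∂(volume.restrict (Icc (0:ℝ) T)), ∀ z ∈ K, ‖G z t‖ ≤ C t
  semicomplete : ∀ᵐ t ∂(volume.restrict (Ici (0:ℝ))), Semicomplete (fun z => G z t) D

/-- `t ↦ f t` is absolutely continuous on `[0,T]`. -/
def AbsContOnIcc (f : ℝ → ℂN N) (T : ℝ) : Prop :=
  ∀ ε : ℝ, 0 < ε → ∃ δ : ℝ, 0 < δ ∧ ∀ n : ℕ, ∀ a b : Fin n → ℝ,
    (∀ i, a i ∈ Icc (0:ℝ) T) → (∀ i, b i ∈ Icc (0:ℝ) T) → (∀ i, a i ≤ b i) →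
    (∀ i j, i ≠ j → Disjoint (Ioo (a i) (b i)) (Ioo (a j) (b j))) →
    (∑ i, (b i - a i)) < δ → (∑ i, ‖f (b i) - f (a i)‖) < ε

/-- A solution `(f_t)_{t ≥ 0}` of the Loewner PDE `∂f_t(z)/∂t = -df_t(z)·G(z,t)` on `D`. -/
structure IsLoewnerSolution (f : ℝ → ℂN N → ℂN N) (G : ℂN N → ℝ → ℂN N)
    (D : Set (ℂN N)) : Prop where
  holomorphic : ∀ t : ℝ, 0 ≤ t → DifferentiableOn ℂ (f t) D
  continuous_t : ∀ K : Set (ℂN N), K ⊆ D → IsCompact K → ∀ t₀ : ℝ, 0 ≤ t₀ →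
    ∀ ε : ℝ, 0 < ε → ∃ δ : ℝ, 0 < δ ∧ ∀ t : ℝ, 0 ≤ t → |t - t₀| < δ →
      ∀ z ∈ K, ‖f t z - f t₀ z‖ < ε
  locAbsCont : ∀ z ∈ D, ∀ T : ℝ, 0 < T → AbsContOnIcc (fun t => f t z) T
  pde : ∀ z ∈ D, ∀ᵐ t ∂(volume.restrict (Ici (0:ℝ))),
    HasDerivAt (fun s : ℝ => f s z) (-(fderiv ℂ (f t) z (G z t))) t

/-- An evolution family of order `d` on `D`. -/
structure IsEvolutionFamily (φ : ℝ → ℝ → ℂN N → ℂN N) (D : Set (ℂN N)) (d : ℝ≥0∞) :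
    Prop where
  mapsTo : ∀ s t : ℝ, 0 ≤ s → s ≤ t → MapsTo (φ s t) D D
  holomorphic : ∀ s t : ℝ, 0 ≤ s → s ≤ t → DifferentiableOn ℂ (φ s t) D
  id_eq : ∀ s : ℝ, 0 ≤ s → ∀ z ∈ D, φ s s z = z
  comp : ∀ s u t : ℝ, 0 ≤ s → s ≤ u → u ≤ t → ∀ z ∈ D, φ s t z = φ u t (φ s u z)
  lp_bound : ∀ T : ℝ, 0 < T → ∀ K : Set (ℂN N), K ⊆ D → IsCompact K →
    ∃ c : ℝ → ℝ, (∀ ξ, 0 ≤ c ξ) ∧ MemLp c d (volume.restrict (Icc (0:ℝ) T)) ∧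
      ∀ z ∈ K, ∀ s u t : ℝ, 0 ≤ s → s ≤ u → u ≤ t → t ≤ T →
        ‖φ s t z - φ s u z‖ ≤ ∫ ξ in u..t, c ξ

/-- The family `(φ_{s,t})` solves the Loewner ODE `∂φ_{s,t}(z)/∂t = G(φ_{s,t}(z),t)`
for all `z ∈ D`, all `s ≥ 0` and a.e. `t ∈ [s,∞)`. -/
def SolvesLoewnerODE (φ : ℝ → ℝ → ℂN N → ℂN N) (G : ℂN N → ℝ → ℂN N)
    (D : Set (ℂN N)) : Prop :=
  ∀ z ∈ D, ∀ s : ℝ, 0 ≤ s → ∀ᵐ t ∂(volume.restrict (Ici s)),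
    HasDerivAt (fun r : ℝ => φ s r z) (G (φ s t z) t) t

/-- The family `(f_t)` is of order `d` on `D`. -/
def IsOrderD (f : ℝ → ℂN N → ℂN N) (D : Set (ℂN N)) (d : ℝ≥0∞) : Prop :=
  ∀ K : Set (ℂN N), K ⊆ D → IsCompact K → ∀ T : ℝ, 0 < T →
    ∃ c : ℝ → ℝ, (∀ ξ, 0 ≤ c ξ) ∧ MemLp c d (volume.restrict (Icc (0:ℝ) T)) ∧
      ∀ z ∈ K, ∀ s t : ℝ, 0 ≤ s → s ≤ t → t ≤ T →
        ‖f s z - f t z‖ ≤ ∫ ξ in s..t, c ξ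

/-- `(U, V)` is a Runge pair: every function holomorphic on `U` is approximable, uniformly on
compact subsets of `U`, by functions holomorphic on `V`. -/
def IsRungePair (U V : Set (ℂN N)) : Prop :=
  ∀ f : ℂN N → ℂ, DifferentiableOn ℂ f U →
    ∀ K : Set (ℂN N), K ⊆ U → IsCompact K → ∀ ε : ℝ, 0 < ε →
      ∃ g : ℂN N → ℂ, DifferentiableOn ℂ g V ∧ ∀ z ∈ K, ‖f z - g z‖ < ε

/-- A Runge domain of `ℂ^N`. -/
def IsRungeDomain (U : Set (ℂN N)) : Prop := IsRungePair U univ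

/-- A holomorphic automorphism of `ℂ^N`. -/
def IsHolomorphicAutomorphism (α : ℂN N → ℂN N) : Prop :=
  Differentiable ℂ α ∧ ∃ β : ℂN N → ℂN N, Differentiable ℂ β ∧
    Function.LeftInverse β α ∧ Function.RightInverse β α

/-- A starlike domain: a domain which is star-shaped with respect to one of its points. -/
def IsStarlikeDomain (U : Set (ℂN N)) : Prop :=
  IsDomainSet U ∧ ∃ p ∈ U, ∀ z ∈ U, ∀ t : ℝ, t ∈ Icc (0:ℝ) 1 → p + t • (z - p) ∈ U

/-- A starshapelike domain: the image of `U` under some holomorphic automorphism of `ℂ^N`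
is starlike. -/
def IsStarshapelike (U : Set (ℂN N)) : Prop :=
  IsDomainSet U ∧ ∃ α : ℂN N → ℂN N, IsHolomorphicAutomorphism α ∧
    IsStarlikeDomain (α '' U)

open scoped Topology NNReal

/-! Fix a countable dense set `S ⊆ D`. Off a null set of times `t`, the PDE holds at every
point of `S`, and `t` is a differentiability point of the primitives of countably many integrable
majorants `c` of `‖df_s(x) G(x,s)‖`, one for each rational closed ball centred in `S` and each
integer time horizon. At such a `t` the growth estimate `‖f_y(x) - f_t(x)‖ ≤ |∫_t^y c|`, which
follows from the PDE by absolute continuity in `t`, bounds the difference quotients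
`(f_y - f_t) / (y - t)` near any `z ∈ D`; being holomorphic, they are then equi-Lipschitz in `x`
by the Schwarz lemma. They converge on `S` to the continuous map `x ↦ -df_t(x) G(x,t)`, hence
also at `z`. -/

theorem MeasureTheory.exists_null_forall_of_ae_restrict {α : Type*} [MeasurableSpace α]
    {μ : Measure α} {A : Set α} {P : α → Prop} (hA : MeasurableSet A)
    (h : ∀ᵐ t ∂μ.restrict A, P t) : ∃ E ⊆ A, μ E = 0 ∧ ∀ t ∈ A \ E, P t := by
  refine ⟨{t ∈ A | ¬ P t}, sep_subset _ _, ?_, fun t ⟨htA, htE⟩ ↦ not_not.1 fun hP ↦ htE ⟨htA, hP⟩⟩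
  simpa [ae_iff] using (ae_restrict_iff' hA).1 h

theorem Metric.exists_ball_subset_closedBall_rat_subset {X : Type*} [PseudoMetricSpace X]
    {U S : Set X} {z : X} (hU : U ∈ 𝓝 z) (hz : z ∈ closure S) :
    ∃ w ∈ S, ∃ q : ℚ, ∃ r > 0, ball z r ⊆ closedBall w q ∧ closedBall w q ⊆ U := by
  obtain ⟨ε, hε, hεU⟩ := Metric.mem_nhds_iff.1 hU
  obtain ⟨w, hwS, hwz⟩ := Metric.mem_closure_iff.1 hz (ε / 4) (by positivity)
  obtain ⟨q, hq₁, hq₂⟩ := exists_rat_btwn (show 2 * (ε / 4) < 3 * (ε / 4) by linarith)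
  refine ⟨w, hwS, q, ε / 4, by positivity, fun x hx ↦ ?_, fun x hx ↦ hεU ?_⟩
  · rw [mem_ball] at hx
    rw [mem_closedBall]
    linarith [dist_triangle x z w, dist_comm z w]
  · rw [mem_closedBall] at hx
    rw [mem_ball]
    linarith [dist_triangle x w z, dist_comm z w]

theorem LipschitzWith.comp_absolutelyContinuousOnInterval {X Y : Type*} [PseudoMetricSpace X]
    [PseudoMetricSpace Y] {g : X → Y} {K : ℝ≥0} (hg : LipschitzWith K g) {u : ℝ → X} {a b : ℝ}
    (hu : AbsolutelyContinuousOnInterval u a b) :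
    AbsolutelyContinuousOnInterval (g ∘ u) a b := by
  have hK := Filter.Tendsto.const_mul (K : ℝ) hu
  rw [mul_zero] at hK
  refine squeeze_zero (fun _ ↦ Finset.sum_nonneg fun _ _ ↦ dist_nonneg) (fun E ↦ ?_) hK
  rw [Finset.mul_sum]
  exact Finset.sum_le_sum fun i _ ↦ hg.dist_le_mul _ _

theorem AbsolutelyContinuousOnInterval.norm_sub_le_integral {E : Type*} [NormedAddCommGroup E]
    [NormedSpace ℝ E] {u : ℝ → E} {c : ℝ → ℝ} {a b : ℝ}
    (hu : AbsolutelyContinuousOnInterval u a b) (hab : a ≤ b)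
    (hc : IntervalIntegrable c volume a b)
    (hu' : ∀ᵐ s, s ∈ Icc a b → ∃ g, HasDerivAt u g s ∧ ‖g‖ ≤ c s) :
    ‖u b - u a‖ ≤ ∫ s in a..b, c s := by
  obtain ⟨ℓ, hℓ, hℓu⟩ := exists_dual_vector'' ℝ (u b - u a)
  have hφ : AbsolutelyContinuousOnInterval (ℓ ∘ u) a b :=
    ℓ.lipschitz.comp_absolutelyContinuousOnInterval hu
  calc ‖u b - u a‖ = (ℓ ∘ u) b - (ℓ ∘ u) a := by simpa using hℓu.symm
    _ = ∫ s in a..b, deriv (ℓ ∘ u) s := hφ.integral_deriv_eq_sub.symm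
    _ ≤ ∫ s in a..b, c s := by
      refine intervalIntegral.integral_mono_ae_restrict hab hφ.intervalIntegrable_deriv hc ?_
      filter_upwards [(ae_restrict_iff' measurableSet_Icc).2 hu'] with s ⟨g, hg, hgc⟩
      rw [(ℓ.hasFDerivAt.comp_hasDerivAt s hg).deriv]
      calc ℓ g ≤ ‖ℓ‖ * ‖g‖ := (Real.le_norm_self _).trans (ℓ.le_opNorm g)
        _ ≤ 1 * c s := by gcongr
        _ = c s := one_mul _

theorem Complex.norm_fderiv_sub_fderiv_le_of_mapsTo_ball {E F : Type*} [NormedAddCommGroup E]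
    [NormedSpace ℂ E] [NormedAddCommGroup F] [NormedSpace ℂ F] {f : E → F} {x y : E} {R M : ℝ}
    (hd : DifferentiableOn ℂ f (ball x (2 * R)))
    (hmaps : MapsTo f (ball x (2 * R)) (closedBall (f x) M)) (hy : y ∈ ball x R) :
    ‖fderiv ℂ f y - fderiv ℂ f x‖ ≤ 4 * M / R ^ 2 * ‖y - x‖ := by
  have hR : 0 < R := pos_of_mem_ball hy
  have hsub : ∀ w ∈ ball x R, ball w R ⊆ ball x (2 * R) := fun w hw v hv ↦ by
    rw [mem_ball] at *
    linarith [dist_triangle v w x]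
  have hdiff : ∀ w ∈ ball x R, ∀ v ∈ ball w R, DifferentiableAt ℂ f v := fun w hw v hv ↦
    hd.differentiableAt (isOpen_ball.mem_nhds (hsub w hw hv))
  have hlip : ∀ w ∈ ball x R, ∀ v ∈ ball w R, ‖f v - f w‖ ≤ 2 * M / R * ‖v - w‖ := by
    intro w hw v hv
    have hmaps' : MapsTo f (ball w R) (closedBall (f w) (2 * M)) := fun u hu ↦ by
      have h1 := hmaps (hsub w hw hu)
      have h2 := hmaps (hsub w hw (mem_ball_self hR))
      rw [mem_closedBall] at *
      linarith [dist_triangle_right (f u) (f w) (f x)]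
    simpa [dist_eq_norm, mul_div_assoc] using
      Complex.dist_le_div_mul_dist_of_mapsTo_ball (hd.mono (hsub w hw)) hmaps' hv
  -- `fderiv f y - fderiv f x` is the derivative at `x` of `w ↦ f (w + h) - f w`, which is
  -- `O(‖h‖)` on `ball x R`, so the Schwarz lemma bounds it by `O(‖h‖)`.
  set h := y - x
  have hh : ∀ w ∈ ball x R, w + h ∈ ball w R := fun w _ ↦ by
    simpa [h, dist_eq_norm] using hy
  have hΦ : HasFDerivAt (fun w ↦ f (w + h) - f w) (fderiv ℂ f y - fderiv ℂ f x) x := by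
    have := (hdiff x (mem_ball_self hR) (x + h) (hh x (mem_ball_self hR))).hasFDerivAt.comp x
      ((hasFDerivAt_id x).add_const h)
    simp only [add_sub_cancel, h, ContinuousLinearMap.comp_id] at this
    exact this.sub (hdiff x (mem_ball_self hR) x (mem_ball_self hR)).hasFDerivAt
  have hΦd : DifferentiableOn ℂ (fun w ↦ f (w + h) - f w) (ball x R) := fun w hw ↦
    ((hdiff w hw _ (hh w hw)).comp w (differentiableAt_id.add_const h) |>.sub
      (hdiff w hw w (mem_ball_self hR))).differentiableWithinAt
  have hΦmaps : MapsTo (fun w ↦ f (w + h) - f w) (ball x R)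
      (closedBall (f (x + h) - f x) (4 * M / R * ‖h‖)) := fun w hw ↦ by
    have h1 := hlip w hw _ (hh w hw)
    have h2 := hlip x (mem_ball_self hR) _ (hh x (mem_ball_self hR))
    simp only [add_sub_cancel_left] at h1 h2
    rw [mem_closedBall, dist_eq_norm]
    show ‖f (w + h) - f w - (f (x + h) - f x)‖ ≤ _
    linarith [norm_sub_le (f (w + h) - f w) (f (x + h) - f x),
      show 4 * M / R * ‖h‖ = 2 * M / R * ‖h‖ + 2 * M / R * ‖h‖ by ring]
  calc ‖fderiv ℂ f y - fderiv ℂ f x‖ ≤ 4 * M / R * ‖h‖ / R := by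
        rw [← hΦ.fderiv]
        exact Complex.norm_fderiv_le_div_of_mapsTo_ball hΦd hΦmaps hR
    _ = 4 * M / R ^ 2 * ‖y - x‖ := by ring

theorem DifferentiableOn.continuousAt_fderiv {E F : Type*} [NormedAddCommGroup E]
    [NormedSpace ℂ E] [NormedAddCommGroup F] [NormedSpace ℂ F] {f : E → F} {s : Set E} {x : E}
    (hf : DifferentiableOn ℂ f s) (hs : s ∈ 𝓝 x) : ContinuousAt (fderiv ℂ f) x := by
  obtain ⟨ρ, hρ, hρs⟩ := Metric.mem_nhds_iff.1 hs
  obtain ⟨ρ', hρ', hρ'f⟩ := Metric.continuousAt_iff.1 (hf.continuousOn.continuousAt hs) 1 one_pos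
  set R := min ρ ρ' / 2
  have hsub : ball x (2 * R) ⊆ ball x (min ρ ρ') :=
    ball_subset_ball (le_of_eq (by simp only [R]; ring))
  refine continuousAt_of_locally_lipschitz (by positivity : 0 < R) (4 * 1 / R ^ 2)
    fun y hy ↦ ?_
  rw [dist_eq_norm, dist_eq_norm]
  refine Complex.norm_fderiv_sub_fderiv_le_of_mapsTo_ball
    (hf.mono (hsub.trans ((ball_subset_ball (min_le_left _ _)).trans hρs))) (fun w hw ↦ ?_) hy
  exact mem_closedBall.2 (hρ'f ((hsub hw).trans_le (min_le_right _ _))).le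

theorem hasDerivAt_of_mem_closure_of_differentiableOn {E F : Type*} [NormedAddCommGroup E]
    [NormedSpace ℂ E] [NormedAddCommGroup F] [NormedSpace ℂ F] {f : ℝ → E → F} {g : E → F}
    {S : Set E} {t B R : ℝ} {z : E} (hR : 0 < R)
    (hf : ∀ᶠ y in 𝓝 t, DifferentiableOn ℂ (f y) (ball z R) ∧
      ∀ x ∈ ball z R, ‖f y x - f t x‖ ≤ B * |y - t|)
    (hS : ∀ w ∈ S, HasDerivAt (fun y ↦ f y w) (g w) t) (hz : z ∈ closure S)
    (hg : ContinuousAt g z) :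
    HasDerivAt (fun y ↦ f y z) (g z) t := by
  obtain ⟨V, hV, hVf⟩ := hf.exists_mem
  let Q : ↥(V \ {t}) → E → F := fun y x ↦ slope (fun s ↦ f s x) t y
  have hrange : range ((↑) : ↥(V \ {t}) → ℝ) ∈ 𝓝[≠] t := by
    rw [Subtype.range_coe]
    exact sdiff_mem_nhdsWithin_compl hV {t}
  have hQ : EquicontinuousAt Q z := by
    refine Metric.equicontinuousAt_of_continuity_modulus (fun x ↦ 2 * B / R * dist x z) ?_ Q ?_
    · simpa using (tendsto_const_nhds (x := 2 * B / R)).mul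
        ((continuous_id.dist continuous_const).tendsto' z 0 (dist_self z))
    filter_upwards [ball_mem_nhds z hR] with x hx i
    obtain ⟨hdiff, hbound⟩ := hVf i i.2.1
    have hit : 0 < |(i : ℝ) - t| := abs_pos.2 (sub_ne_zero.2 i.2.2)
    have hnorm : ∀ x ∈ ball z R, ‖Q i x‖ ≤ B := fun x hx ↦ by
      simp only [Q, slope_def_module, norm_smul, norm_inv, Real.norm_eq_abs]
      rw [inv_mul_le_iff₀ hit, mul_comm]
      exact hbound x hx
    have hmaps : MapsTo (Q i) (ball z R) (closedBall (Q i z) (2 * B)) := fun x hx ↦ by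
      rw [mem_closedBall, dist_eq_norm]
      linarith [norm_sub_le (Q i x) (Q i z), hnorm x hx, hnorm z (mem_ball_self hR)]
    have hQd : DifferentiableOn ℂ (Q i) (ball z R) := by
      simp only [Q, slope_def_module]
      exact (hdiff.sub (hVf t (mem_of_mem_nhds hV)).1).const_smul (((i : ℝ) - t)⁻¹ : ℝ)
    rw [dist_comm]
    exact Complex.dist_le_div_mul_dist_of_mapsTo_ball hQd hmaps hx
  have := hQ.tendsto_of_mem_closure (l := comap (↑) (𝓝[≠] t)) (hg.mono_left nhdsWithin_le_nhds)
    (fun w hw ↦ (hasDerivAt_iff_tendsto_slope.1 (hS w hw)).comp tendsto_comap) hz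
  exact hasDerivAt_iff_tendsto_slope.2 ((tendsto_comap'_iff hrange).1 this)

theorem AbsContOnIcc.absolutelyContinuousOnInterval {u : ℝ → ℂN N} {T : ℝ} (hT : 0 ≤ T)
    (hu : AbsContOnIcc u T) : AbsolutelyContinuousOnInterval u 0 T := by
  rw [absolutelyContinuousOnInterval_iff]
  intro ε hε
  obtain ⟨δ, hδ, hAC⟩ := hu ε hε
  refine ⟨δ, hδ, fun E ⟨hmem, hdisj⟩ hlen ↦ ?_⟩
  have hI (i : Fin E.1) : (E.2 i).1 ∈ Icc 0 T ∧ (E.2 i).2 ∈ Icc 0 T := by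
    simpa [uIcc_of_le hT] using hmem i (Finset.mem_range.2 i.2)
  have hdist (x y : ℝ) :
      dist (u x) (u y) = ‖u (max x y) - u (min x y)‖ ∧ dist x y = max x y - min x y := by
    rcases le_total x y with h | h
    · simp [h, dist_eq_norm, norm_sub_rev, abs_of_nonpos (sub_nonpos.2 h)]
    · simp [h, dist_eq_norm, abs_of_nonneg (sub_nonneg.2 h)]
  have hsum := hAC E.1 (fun i ↦ min (E.2 i).1 (E.2 i).2) (fun i ↦ max (E.2 i).1 (E.2 i).2)
    (fun i ↦ ⟨le_min (hI i).1.1 (hI i).2.1, min_le_of_left_le (hI i).1.2⟩)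
    (fun i ↦ ⟨le_max_of_le_left (hI i).1.1, max_le (hI i).1.2 (hI i).2.2⟩)
    (fun i ↦ min_le_max)
    (fun i j hij ↦ (hdisj (Finset.mem_coe.2 (Finset.mem_range.2 i.2))
      (Finset.mem_coe.2 (Finset.mem_range.2 j.2)) (Fin.val_injective.ne hij)).mono
        Ioo_subset_Ioc_self Ioo_subset_Ioc_self)
    (by simpa [Finset.sum_range, hdist] using hlen)
  simpa [Finset.sum_range, hdist] using hsum

namespace IsLoewnerSolution

variable {D K : Set (ℂN N)} {G : ℂN N → ℝ → ℂN N} {f : ℝ → ℂN N → ℂN N}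

theorem exists_norm_le_of_isCompact (hf : IsLoewnerSolution f G D) (hKD : K ⊆ D)
    (hK : IsCompact K) (m : ℝ) :
    ∃ M, ∀ s ∈ Icc 0 m, ∀ x ∈ K, ‖f s x‖ ≤ M := by
  refine isCompact_Icc.induction_on (p := fun T ↦ ∃ M, ∀ s ∈ T, ∀ x ∈ K, ‖f s x‖ ≤ M)
    ⟨0, by simp⟩ (fun T T' hT ⟨M, hM⟩ ↦ ⟨M, fun s hs ↦ hM s (hT hs)⟩)
    (fun T T' ⟨M, hM⟩ ⟨M', hM'⟩ ↦ ⟨max M M', fun s hs x hx ↦ hs.elim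
      (fun hs ↦ (hM s hs x hx).trans (le_max_left _ _))
      (fun hs ↦ (hM' s hs x hx).trans (le_max_right _ _))⟩) fun t₀ ht₀ ↦ ?_
  obtain ⟨δ, hδ, hclose⟩ := hf.continuous_t K hKD hK t₀ ht₀.1 1 one_pos
  obtain ⟨M₀, hM₀⟩ := hK.exists_bound_of_continuousOn
    ((hf.holomorphic t₀ ht₀.1).continuousOn.mono hKD)
  refine ⟨Icc 0 m ∩ ball t₀ δ, inter_mem_nhdsWithin _ (ball_mem_nhds t₀ hδ),
    M₀ + 1, fun s ⟨hs, hsδ⟩ x hx ↦ ?_⟩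
  have := hclose s hs.1 (by simpa [Real.dist_eq] using hsδ) x hx
  linarith [norm_le_norm_add_norm_sub' (f s x) (f t₀ x), hM₀ x hx]

theorem exists_integrable_bound_fderiv_apply {d : ℝ≥0∞} (hG : IsHerglotzVectorField G D d)
    (hd : 1 ≤ d) (hf : IsLoewnerSolution f G D) (hD : IsOpen D) (hKD : K ⊆ D) (hK : IsCompact K)
    {m : ℝ} (hm : 0 < m) :
    ∃ c : ℝ → ℝ, Integrable c ∧
      ∀ᵐ s, s ∈ Icc 0 m → ∀ x ∈ K, ‖fderiv ℂ (f s) x (G x s)‖ ≤ c s := by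
  obtain ⟨σ, hσ, hσD⟩ := hK.exists_cthickening_subset_open hD hKD
  have hK' : IsCompact (cthickening σ K) := hK.cthickening
  obtain ⟨M, hM⟩ := hf.exists_norm_le_of_isCompact hσD hK' m
  obtain ⟨C, -, hCp, hC⟩ := hG.lp_bound _ hσD hK' m hm
  have hCi : IntegrableOn C (Icc 0 m) := hCp.integrable hd
  refine ⟨(Icc 0 m).indicator fun s ↦ 2 * M / σ * C s,
    (integrable_indicator_iff measurableSet_Icc).2 (hCi.const_mul _), ?_⟩
  filter_upwards [(ae_restrict_iff' measurableSet_Icc).1 hC] with s hCs hs x hx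
  have hball : ball x σ ⊆ cthickening σ K :=
    (ball_subset_thickening hx σ).trans (thickening_subset_cthickening σ K)
  have hmaps : MapsTo (f s) (ball x σ) (closedBall (f s x) (2 * M)) := fun y hy ↦ by
    rw [mem_closedBall, dist_eq_norm]
    linarith [norm_sub_le (f s y) (f s x), hM s hs y (hball hy),
      hM s hs x (hball (mem_ball_self hσ))]
  have hdf := Complex.norm_fderiv_le_div_of_mapsTo_ball
    ((hf.holomorphic s hs.1).mono (hball.trans hσD)) hmaps hσ
  rw [indicator_of_mem hs]
  calc ‖fderiv ℂ (f s) x (G x s)‖ ≤ ‖fderiv ℂ (f s) x‖ * ‖G x s‖ :=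
        ContinuousLinearMap.le_opNorm _ _
    _ ≤ 2 * M / σ * C s := by
      gcongr
      · exact (norm_nonneg _).trans hdf
      · exact hCs hs x (self_subset_cthickening K hx)

theorem norm_sub_le_integral (hf : IsLoewnerSolution f G D) {x : ℂN N} (hx : x ∈ D)
    {c : ℝ → ℝ} (hc : Integrable c) {m : ℝ} (hm : 0 < m)
    (hcx : ∀ᵐ s, s ∈ Icc 0 m → ‖fderiv ℂ (f s) x (G x s)‖ ≤ c s)
    {a b : ℝ} (ha : 0 ≤ a) (hab : a ≤ b) (hbm : b ≤ m) :
    ‖f b x - f a x‖ ≤ ∫ s in a..b, c s := by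
  have hac := ((hf.locAbsCont x hx m hm).absolutelyContinuousOnInterval hm.le).mono
    (by rw [uIcc_of_le hab, uIcc_of_le hm.le]; exact Icc_subset_Icc ha hbm)
  refine hac.norm_sub_le_integral hab hc.intervalIntegrable ?_
  filter_upwards [(ae_restrict_iff' measurableSet_Ici).1 (hf.pde x hx), hcx] with s hpde hcs hs
  have hs' : s ∈ Icc 0 m := ⟨ha.trans hs.1, hs.2.trans hbm⟩
  exact ⟨_, hpde hs'.1, (norm_neg _).trans_le (hcs hs')⟩

theorem exists_eventually_norm_sub_le (hf : IsLoewnerSolution f G D) (hKD : K ⊆ D)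
    {c : ℝ → ℝ} (hc : Integrable c) {m : ℝ}
    (hcK : ∀ᵐ s, s ∈ Icc 0 m → ∀ x ∈ K, ‖fderiv ℂ (f s) x (G x s)‖ ≤ c s)
    {t : ℝ} (ht : t ∈ Ioo 0 m) (hct : DifferentiableAt ℝ (fun y ↦ ∫ s in 0..y, c s) t) :
    ∃ B, ∀ᶠ y in 𝓝 t, ∀ x ∈ K, ‖f y x - f t x‖ ≤ B * |y - t| := by
  obtain ⟨B, hB⟩ := hct.hasDerivAt.isBigO_sub.bound
  refine ⟨B, ?_⟩
  filter_upwards [hB, Icc_mem_nhds ht.1 ht.2] with y hy hym x hx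
  have hm : 0 < m := ht.1.trans ht.2
  have hcx := hcK.mono fun s hs hsm ↦ hs hsm x hx
  rw [intervalIntegral.integral_interval_sub_left hc.intervalIntegrable hc.intervalIntegrable,
    Real.norm_eq_abs, Real.norm_eq_abs] at hy
  rcases le_total t y with hty | hyt
  · calc ‖f y x - f t x‖ ≤ ∫ s in t..y, c s :=
          hf.norm_sub_le_integral (hKD hx) hc hm hcx ht.1.le hty hym.2
      _ ≤ B * |y - t| := (le_abs_self _).trans hy
  · calc ‖f y x - f t x‖ = ‖f t x - f y x‖ := norm_sub_rev _ _
      _ ≤ ∫ s in y..t, c s := hf.norm_sub_le_integral (hKD hx) hc hm hcx hym.1 hyt ht.2.le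
      _ ≤ B * |y - t| := by
        rw [intervalIntegral.integral_symm]
        exact (neg_le_abs _).trans hy

theorem hasDerivAt_of_eventually_norm_sub_le {d : ℝ≥0∞} (hG : IsHerglotzVectorField G D d)
    (hf : IsLoewnerSolution f G D) {S : Set (ℂN N)} {t B R : ℝ} {z : ℂN N} (ht : 0 < t)
    (hR : 0 < R) (hzD : ball z R ⊆ D)
    (hB : ∀ᶠ y in 𝓝 t, ∀ x ∈ ball z R, ‖f y x - f t x‖ ≤ B * |y - t|)
    (hS : ∀ w ∈ S, HasDerivAt (fun s ↦ f s w) (-(fderiv ℂ (f t) w (G w t))) t)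
    (hz : z ∈ closure S) :
    HasDerivAt (fun s ↦ f s z) (-(fderiv ℂ (f t) z (G z t))) t := by
  have hDz : D ∈ 𝓝 z := mem_of_superset (ball_mem_nhds z hR) hzD
  refine hasDerivAt_of_mem_closure_of_differentiableOn (B := B) hR ?_ hS hz ?_
  · filter_upwards [hB, Ioi_mem_nhds ht] with y hy hy0
    exact ⟨(hf.holomorphic y (le_of_lt hy0)).mono hzD, hy⟩
  · exact (((hf.holomorphic t ht.le).continuousAt_fderiv hDz).clm_apply
      ((hG.holomorphic t ht.le).continuousOn.continuousAt hDz)).neg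

end IsLoewnerSolution

theorem loewner_solution_common_null_set_general
    (N : ℕ) (D : Set (ℂN N)) (hD : IsDomainSet D)
    (d : ℝ≥0∞) (hd : 1 ≤ d) (G : ℂN N → ℝ → ℂN N)
    (hG : IsHerglotzVectorField G D d)
    (f : ℝ → ℂN N → ℂN N) (hf : IsLoewnerSolution f G D) :
    ∃ E : Set ℝ, E ⊆ Ici (0:ℝ) ∧ volume E = 0 ∧
      ∀ z ∈ D, ∀ t ∈ Ici (0:ℝ) \ E,
        HasDerivAt (fun s : ℝ => f s z) (-(fderiv ℂ (f t) z (G z t))) t := by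
  obtain ⟨S, hSD, hSc, hDS⟩ :=
    (TopologicalSpace.IsSeparable.of_separableSpace D).exists_countable_dense_subset
  set I : Set (ℂN N × ℚ × ℕ) := {i | i.1 ∈ S ∧ closedBall i.1 i.2.1 ⊆ D ∧ 0 < i.2.2}
  have hI : I.Countable :=
    (hSc.prod (countable_univ (α := ℚ × ℕ))).mono fun i hi ↦ mem_prod.2 ⟨hi.1, mem_univ _⟩
  choose c hc hcK using fun i (hi : i ∈ I) ↦ hf.exists_integrable_bound_fderiv_apply hG hd hD.1
    hi.2.1 (isCompact_closedBall i.1 i.2.1) (Nat.cast_pos.2 hi.2.2)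
  have hreg : ∀ᵐ t, ∀ i (hi : i ∈ I), DifferentiableAt ℝ (fun y ↦ ∫ s in 0..y, c i hi s) t :=
    (ae_ball_iff hI).2 fun i hi ↦
      (LocallyIntegrable.ae_hasDerivAt_integral (hc i hi).locallyIntegrable).mono
        fun t ht ↦ (ht 0).differentiableAt
  suffices h : ∀ᵐ t ∂volume.restrict (Ici 0), ∀ z ∈ D,
      HasDerivAt (fun s ↦ f s z) (-(fderiv ℂ (f t) z (G z t))) t by
    obtain ⟨E, hE, hE0, hEt⟩ := exists_null_forall_of_ae_restrict measurableSet_Ici h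
    exact ⟨E, hE, hE0, fun z hz t ht ↦ hEt t ht z hz⟩
  filter_upwards [(ae_ball_iff hSc).2 fun w hw ↦ hf.pde w (hSD hw), ae_restrict_of_ae hreg,
    (ae_restrict_congr_set Ioi_ae_eq_Ici).1 (ae_restrict_mem measurableSet_Ioi)]
    with t htS ht htpos z hz
  obtain ⟨w, hwS, q, r, hr, hzr, hqD⟩ :=
    Metric.exists_ball_subset_closedBall_rat_subset (hD.1.mem_nhds hz) (hDS hz)
  obtain ⟨m, hm⟩ := exists_nat_gt t
  have hi : (w, q, m) ∈ I := ⟨hwS, hqD, Nat.cast_pos.1 (htpos.trans hm)⟩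
  obtain ⟨B, hB⟩ := hf.exists_eventually_norm_sub_le hqD (hc _ hi) (hcK _ hi) ⟨htpos, hm⟩ (ht _ hi)
  exact hf.hasDerivAt_of_eventually_norm_sub_le hG htpos hr (hzr.trans hqD)
    (hB.mono fun y hy x hx ↦ hy x (hzr hx)) htS (hDS hz)

/-- For a solution of the Loewner PDE the exceptional null set can be chosen
independently of the point `z ∈ D`. -/
theorem loewner_solution_common_null_set
    (N : ℕ) (hN : 1 ≤ N) (D : Set (ℂN N)) (hD : IsDomainSet D)
    (hDbdd : Bornology.IsBounded D) (hDconv : Convex ℝ D)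
    (d : ℝ≥0∞) (hd : 1 ≤ d) (G : ℂN N → ℝ → ℂN N)
    (hG : IsHerglotzVectorField G D d)
    (f : ℝ → ℂN N → ℂN N) (hf : IsLoewnerSolution f G D) :
    ∃ E : Set ℝ, E ⊆ Ici (0:ℝ) ∧ volume E = 0 ∧
      ∀ z ∈ D, ∀ t ∈ Ici (0:ℝ) \ E,
        HasDerivAt (fun s : ℝ => f s z) (-(fderiv ℂ (f t) z (G z t))) t :=
  loewner_solution_common_null_set_general N D hD d hd G hG f hf
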